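/- Let K be an algebraically closed field, let M_r ⊆ K^{m×n} be the variety of matrices of rank at most r, and let A ∈ M_r with rank(A) = r. Then the tangent space T_A M_r, viewed as a matrix space, satisfies SR(T_A M_r) ≤ 2r. -/

import Mathlib

open scoped BigOperators

/-- `SliceRankLE T r` : the 3-tensor `T` has slice rank at most `r`. -/
def SliceRankLE {F : Type*} [Field F] {n1 n2 n3 : ℕ}
    (T : Fin n1 → Fin n2 → Fin n3 → F) (r : ℕ) : Prop :=
  ∃ r1 r2 r3 : ℕ, r1 + r2 + r3 = r ∧
    ∃ (a : Fin r1 → Fin n1 → F) (g1 : Fin r1 → Fin n2 → Fin n3 → F)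
      (b : Fin r2 → Fin n2 → F) (g2 : Fin r2 → Fin n1 → Fin n3 → F)
      (c : Fin r3 → Fin n3 → F) (g3 : Fin r3 → Fin n1 → Fin n2 → F),
      ∀ i j k, T i j k =
        (∑ s, a s i * g1 s j k) + (∑ s, b s j * g2 s i k) + (∑ s, c s k * g3 s i j)

/-- The slice rank of a 3-tensor. -/
noncomputable def sliceRank {F : Type*} [Field F] {n1 n2 n3 : ℕ}
    (T : Fin n1 → Fin n2 → Fin n3 → F) : ℕ :=
  sInf {r | SliceRankLE T r}

/-- Dimension of an affine algebraic set: Krull dimension of its coordinate ring. -/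
noncomputable def varietyDim {K : Type*} [Field K] {σ : Type*} (V : Set (σ → K)) : ℕ :=
  ENat.toNat ((ringKrullDim (MvPolynomial σ K ⧸ MvPolynomial.vanishingIdeal K V)).unbotD 0)

/-- The kernel variety of the bilinear map corresponding to a 3-tensor,
over the algebraic closure. -/
def kerSet {F : Type*} [Field F] {n1 n2 n3 : ℕ}
    (T : Fin n1 → Fin n2 → Fin n3 → F) :
    Set ((Fin n1 ⊕ Fin n2) → AlgebraicClosure F) :=
  {w | ∀ k : Fin n3,
    ∑ i : Fin n1, ∑ j : Fin n2,
      algebraMap F (AlgebraicClosure F) (T i j k) * w (Sum.inl i) * w (Sum.inr j) = 0}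

/-- The geometric rank of a 3-tensor. -/
noncomputable def geoRank {F : Type*} [Field F] {n1 n2 n3 : ℕ}
    (T : Fin n1 → Fin n2 → Fin n3 → F) : ℕ :=
  n1 + n2 - varietyDim (kerSet T)

/-- The analytic rank of a 3-tensor over a finite field, w.r.t. an additive character χ. -/
noncomputable def analyticRank {F : Type*} [Field F] [Fintype F] {n1 n2 n3 : ℕ}
    (χ : AddChar F ℂ) (T : Fin n1 → Fin n2 → Fin n3 → F) : ℝ :=
  - Real.logb (Fintype.card F)
      (((∑ x : Fin n1 → F, ∑ y : Fin n2 → F, ∑ z : Fin n3 → F,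
          χ (∑ i, ∑ j, ∑ k, T i j k * x i * y j * z k)) /
        ((Fintype.card F : ℂ) ^ (n1 + n2 + n3))).re)

/-- The tangent space of a (sub)set `V ⊆ K^σ` at a point `p`. -/
def tangentSpaceAt (K : Type*) [Field K] {σ : Type*} [Fintype σ] [DecidableEq σ]
    (V : Set (σ → K)) (p : σ → K) : Set (σ → K) :=
  {v | ∀ g ∈ MvPolynomial.vanishingIdeal K V,
    ∑ i, v i * MvPolynomial.eval p (MvPolynomial.pderiv i g) = 0}

/-- `matrixSRLE L r`: the matrix space `L` has slice rank at most `r`; the slice rank of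
a matrix space is the slice rank of the 3-tensor obtained from any basis of `L`. -/
def matrixSRLE {K : Type*} [Field K] {m n : ℕ}
    (L : Submodule K (Matrix (Fin m) (Fin n) K)) (r : ℕ) : Prop :=
  ∀ (d : ℕ) (B : Fin d → Matrix (Fin m) (Fin n) K),
    LinearIndependent K B → Submodule.span K (Set.range B) = L →
      SliceRankLE (fun i j k => B k i j) r

/-- The slice rank of a matrix space. -/
noncomputable def matrixSliceRank {K : Type*} [Field K] {m n : ℕ}
    (L : Submodule K (Matrix (Fin m) (Fin n) K)) : ℕ :=
  sInf {r | matrixSRLE L r}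

/-- The min-entropy of a map between finite sets (inputs uniform at random). -/
noncomputable def minEntropy {A B : Type*} [Fintype A] [Fintype B] [DecidableEq B]
    (X : A → B) : ℝ :=
  - Real.logb 2
      (((Finset.univ.sup fun b => (Finset.univ.filter fun a => X a = b).card : ℕ) : ℝ) /
        (Fintype.card A : ℝ))

/-- The Levi-Civita tensor: the 3-tensor of the 3×3 determinant polynomial. -/
def leviCivita (F : Type*) [Field F] : Fin 3 → Fin 3 → Fin 3 → F := fun i j k =>
  if (i, j, k) = (0, 1, 2) ∨ (i, j, k) = (1, 2, 0) ∨ (i, j, k) = (2, 0, 1) then 1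
  else if (i, j, k) = (2, 1, 0) ∨ (i, j, k) = (1, 0, 2) ∨ (i, j, k) = (0, 2, 1) then -1
  else 0

/-!
Factor `A = C R` with `P C = 1` and `R Q = 1`, where `C` has `r` columns. If `uᵀ A = 0` and
`A v = 0`, then `det ([uᵀ; P] Y [v Q])` is a polynomial in the entries of `Y` vanishing on `M_r`
(an `(r+1) × (r+1)` matrix factoring through `Y`), and at `Y = A` that matrix is
`diag(0, 1, …, 1)`, so its derivative at `A` in direction `X` is `uᵀ X v`. Hence every tangent
vector `X` satisfies `(1 - C P) X (1 - Q R) = 0`, i.e. `X = C (P X) + ((1 - C P) X Q) R`: `r`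
slices along the row index plus `r` slices along the column index.
-/

theorem Matrix.exists_rank_factorization {K m n : Type*} [Field K] [Fintype m] [Fintype n]
    [DecidableEq m] [DecidableEq n] {A : Matrix m n K} {r : ℕ} (hA : A.rank = r) :
    ∃ (C : Matrix m (Fin r) K) (R : Matrix (Fin r) n K) (P : Matrix (Fin r) m K)
      (Q : Matrix n (Fin r) K), A = C * R ∧ P * C = 1 ∧ R * Q = 1 := by
  let b := Module.finBasisOfFinrankEq K (LinearMap.range A.mulVecLin) hA
  let ι := (LinearMap.range A.mulVecLin).subtype ∘ₗ b.equivFun.symm.toLinearMap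
  let π := b.equivFun.toLinearMap ∘ₗ A.mulVecLin.rangeRestrict
  obtain ⟨P, hP⟩ := ι.exists_leftInverse_of_injective <|
    LinearMap.ker_eq_bot.2 (Subtype.val_injective.comp b.equivFun.symm.injective)
  obtain ⟨Q, hQ⟩ := π.exists_rightInverse_of_surjective (by simp [π, LinearMap.range_comp])
  have hιπ : ι ∘ₗ π = A.mulVecLin := LinearMap.ext fun v => by simp [ι, π]
  refine ⟨LinearMap.toMatrix' ι, LinearMap.toMatrix' π, LinearMap.toMatrix' P,
    LinearMap.toMatrix' Q, ?_, ?_, ?_⟩ <;> rw [← LinearMap.toMatrix'_comp]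
  · rw [hιπ]; exact (LinearMap.toMatrix'_toLin' A).symm
  · rw [hP, LinearMap.toMatrix'_id]
  · rw [hQ, LinearMap.toMatrix'_id]

namespace MvPolynomial

section CommSemiring
variable {K σ : Type*} [CommSemiring K] [Fintype σ]

noncomputable def dirDeriv (a x : σ → K) : MvPolynomial σ K →ₗ[K] K where
  toFun f := ∑ i, x i * eval a (pderiv i f)
  map_add' f g := by simp [mul_add, Finset.sum_add_distrib]
  map_smul' c f := by simp [Finset.mul_sum, mul_left_comm]

variable (a x : σ → K)

theorem dirDeriv_mul (f g : MvPolynomial σ K) :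
    dirDeriv a x (f * g) = dirDeriv a x f * eval a g + eval a f * dirDeriv a x g := by
  simp only [dirDeriv, LinearMap.coe_mk, AddHom.coe_mk, Derivation.leibniz, smul_eq_mul,
    map_add, map_mul, Finset.sum_mul, Finset.mul_sum, ← Finset.sum_add_distrib]
  exact Finset.sum_congr rfl fun i _ => by ring

theorem dirDeriv_C_mul (c : K) (f : MvPolynomial σ K) :
    dirDeriv a x (C c * f) = c * dirDeriv a x f := by
  rw [C_mul', map_smul, smul_eq_mul]

theorem dirDeriv_mul_C (c : K) (f : MvPolynomial σ K) :
    dirDeriv a x (f * C c) = dirDeriv a x f * c := by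
  rw [mul_comm, dirDeriv_C_mul, mul_comm]

theorem dirDeriv_X [DecidableEq σ] (i : σ) : dirDeriv a x (X i) = x i := by
  simp [dirDeriv, pderiv_X, Pi.single_apply]

end CommSemiring

open Matrix in
/-- Expanding along row `0`, every term but the first contains both an entry `M 0 j` and a
complementary minor that vanish at `a`. -/
theorem dirDeriv_det_of_map_eval_eq {K σ : Type*} [CommRing K] [Fintype σ] (a x : σ → K)
    {k : ℕ} (M : Matrix (Fin (k + 1)) (Fin (k + 1)) (MvPolynomial σ K))
    (hM : M.map (eval a) = diagonal (vecCons 0 1)) :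
    dirDeriv a x M.det = dirDeriv a x (M 0 0) := by
  have hev : ∀ i j, eval a (M i j) = diagonal (vecCons 0 1) i j := fun i j => by
    rw [← hM, map_apply]
  have hminor : ∀ j : Fin (k + 1), eval a (M.submatrix Fin.succ j.succAbove).det =
      ((diagonal (vecCons 0 1)).submatrix Fin.succ j.succAbove).det := fun j => by
    rw [RingHom.map_det, RingHom.mapMatrix_apply, ← hM]; rfl
  rw [det_succ_row_zero, map_sum, Fin.sum_univ_succ, Finset.sum_eq_zero, add_zero]
  · have h00 := hminor 0
    rw [Fin.succAbove_zero, submatrix_diagonal _ _ (Fin.succ_injective _)] at h00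
    simp [dirDeriv_mul, h00, hev]
  · intro j _
    have hcol : ((diagonal (vecCons (0 : K) 1)).submatrix Fin.succ j.succ.succAbove).det = 0 :=
      det_eq_zero_of_column_eq_zero (⟨0, j.pos⟩ : Fin k) fun i => by
        rw [submatrix_apply, Fin.succAbove_of_castSucc_lt _ _ (by simp [Fin.lt_def]),
          diagonal_apply_ne]
        simp [Fin.ext_iff]
    rw [dirDeriv_mul, hminor, hcol, (eval a).map_mul, hev,
      diagonal_apply_ne _ (Fin.succ_ne_zero j).symm]
    simp

end MvPolynomial

namespace Matrix
open MvPolynomial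

section CommSemiring
variable {K l m n o : Type*} [CommSemiring K] [Fintype m] [Fintype n]

theorem mul_mul_apply_eq_dotProduct (P : Matrix l m K) (X : Matrix m n K)
    (Q : Matrix n o K) (i : l) (j : o) : (P * X * Q) i j = P i ⬝ᵥ X *ᵥ Qᵀ j := by
  rw [Matrix.mul_assoc]
  simp [mul_apply, dotProduct, mulVec]

noncomputable def mvPolynomialXSandwich (P : Matrix l m K) (Q : Matrix n o K) :
    Matrix l o (MvPolynomial (m × n) K) :=
  P.map (C (σ := m × n)) * mvPolynomialX m n K * Q.map (C (σ := m × n))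

variable (P : Matrix l m K) (Q : Matrix n o K)

theorem map_eval_mvPolynomialXSandwich (w : m × n → K) :
    (mvPolynomialXSandwich P Q).map (eval w) = P * of (fun i j => w (i, j)) * Q := by
  ext i j
  simp [mvPolynomialXSandwich, mul_apply]

theorem map_dirDeriv_mvPolynomialXSandwich [DecidableEq m] [DecidableEq n] (a x : m × n → K) :
    (mvPolynomialXSandwich P Q).map (dirDeriv a x) = P * of (fun i j => x (i, j)) * Q := by
  ext i j
  simp [mvPolynomialXSandwich, mul_apply, dirDeriv_mul_C, dirDeriv_C_mul, dirDeriv_X,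
    Finset.sum_mul]

end CommSemiring

variable {K m n : Type*} [Field K] [Fintype m] [Fintype n]

theorem det_mvPolynomialXSandwich_mem_vanishingIdeal {ι : Type*} [Fintype ι] [DecidableEq ι]
    {r : ℕ} (P : Matrix ι m K) (Q : Matrix n ι K) (hr : r < Fintype.card ι) :
    (mvPolynomialXSandwich P Q).det ∈
      vanishingIdeal K {w : m × n → K | (of fun i j => w (i, j)).rank ≤ r} := by
  rw [mem_vanishingIdeal_iff]
  intro w (hw : _ ≤ r)
  change eval w _ = 0
  rw [RingHom.map_det, RingHom.mapMatrix_apply, map_eval_mvPolynomialXSandwich]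
  by_contra hdet
  have := (rank_mul_le_left (P * of fun i j => w (i, j)) Q).trans (rank_mul_le_right P _)
  rw [rank_of_det_ne_zero hdet] at this
  omega

variable [DecidableEq m] [DecidableEq n]

theorem dotProduct_mulVec_eq_zero_of_mem_tangentSpaceAt {r : ℕ} {A : Matrix m n K}
    {P : Matrix (Fin r) m K} {Q : Matrix n (Fin r) K} (hPAQ : P * A * Q = 1)
    {u : m → K} {v : n → K} (hu : u ᵥ* A = 0) (hv : A *ᵥ v = 0) {x : m × n → K}
    (hx : x ∈ tangentSpaceAt K {w : m × n → K | (of fun i j => w (i, j)).rank ≤ r}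
      (fun p => A p.1 p.2)) :
    u ⬝ᵥ of (fun i j => x (i, j)) *ᵥ v = 0 := by
  let P' : Matrix (Fin (r + 1)) m K := vecCons u P
  let Q' : Matrix n (Fin (r + 1)) K := (vecCons v Qᵀ)ᵀ
  have hP'AQ' : P' * A * Q' = diagonal (vecCons 0 1) := by
    ext i j
    rw [mul_mul_apply_eq_dotProduct]
    rcases Fin.eq_zero_or_eq_succ i with rfl | ⟨s, rfl⟩
    · rw [show P' 0 = u from rfl, dotProduct_mulVec, hu, zero_dotProduct]
      simp [diagonal_apply]
    rcases Fin.eq_zero_or_eq_succ j with rfl | ⟨t, rfl⟩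
    · rw [show Q'ᵀ 0 = v from rfl, hv, dotProduct_zero]
      simp
    · rw [show P' s.succ = P s from rfl, show Q'ᵀ t.succ = Qᵀ t from rfl,
        ← mul_mul_apply_eq_dotProduct, hPAQ]
      simp [one_apply, diagonal_apply]
  have hdet := hx _ (det_mvPolynomialXSandwich_mem_vanishingIdeal P' Q' (r := r) (by simp))
  change dirDeriv _ x _ = 0 at hdet
  rw [dirDeriv_det_of_map_eval_eq _ _ _ (by rw [map_eval_mvPolynomialXSandwich]; exact hP'AQ'),
    ← map_apply (f := dirDeriv _ x), map_dirDeriv_mvPolynomialXSandwich,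
    mul_mul_apply_eq_dotProduct] at hdet
  exact hdet

theorem mul_mul_eq_zero_of_mem_tangentSpaceAt {l o : Type*} {r : ℕ} {A : Matrix m n K}
    {P : Matrix (Fin r) m K} {Q : Matrix n (Fin r) K} (hPAQ : P * A * Q = 1)
    {E : Matrix l m K} {F : Matrix n o K} (hE : E * A = 0) (hF : A * F = 0) {x : m × n → K}
    (hx : x ∈ tangentSpaceAt K {w : m × n → K | (of fun i j => w (i, j)).rank ≤ r}
      (fun p => A p.1 p.2)) :
    E * of (fun i j => x (i, j)) * F = 0 := by
  ext i j
  rw [mul_mul_apply_eq_dotProduct, zero_apply]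
  exact dotProduct_mulVec_eq_zero_of_mem_tangentSpaceAt hPAQ (congrFun hE i)
    (funext fun k => congrFun (congrFun hF k) j) hx

theorem eq_mul_add_mul_of_sub_mul_sub_eq_zero {r s : ℕ} {X : Matrix m n K}
    {C : Matrix m (Fin r) K} {P : Matrix (Fin r) m K} {Q : Matrix n (Fin s) K}
    {R : Matrix (Fin s) n K} (h : (1 - C * P) * X * (1 - Q * R) = 0) :
    X = C * (P * X) + (1 - C * P) * X * Q * R := by
  calc X = C * (P * X) + (1 - C * P) * X * Q * R + (1 - C * P) * X * (1 - Q * R) := by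
        simp only [Matrix.mul_sub, Matrix.sub_mul, Matrix.mul_one, Matrix.one_mul,
          Matrix.mul_assoc]
        abel
    _ = _ := by rw [h, add_zero]

end Matrix

theorem matrixSliceRank_le_of_forall_eq_mul_add_mul {K : Type*} [Field K] {m n r s : ℕ}
    {L : Submodule K (Matrix (Fin m) (Fin n) K)}
    (C : Matrix (Fin m) (Fin r) K) (R : Matrix (Fin s) (Fin n) K)
    (hL : ∀ X ∈ L, ∃ (G : Matrix (Fin r) (Fin n) K) (H : Matrix (Fin m) (Fin s) K),
      X = C * G + H * R) :
    matrixSliceRank L ≤ r + s := by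
  refine Nat.sInf_le fun d B _ hB => ?_
  choose G H hGH using fun k => hL (B k) (hB ▸ Submodule.subset_span ⟨k, rfl⟩)
  refine ⟨r, s, 0, rfl, fun t i => C i t, fun t j k => G k t j, fun t j => R t j,
    fun t i k => H k i t, Fin.elim0, Fin.elim0, fun i j k => ?_⟩
  simp [hGH k, Matrix.mul_apply, mul_comm]

theorem sliceRank_tangentSpace_determinantal_general
    {K : Type*} [Field K] {m n r : ℕ}
    (A : Matrix (Fin m) (Fin n) K) (hA : A.rank = r) :
    matrixSliceRank (Submodule.span K
      ((fun v : Fin m × Fin n → K => Matrix.of fun i j => v (i, j)) ''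
        tangentSpaceAt K
          {v : Fin m × Fin n → K | (Matrix.of fun i j => v (i, j)).rank ≤ r}
          (fun p => A p.1 p.2))) ≤ 2 * r := by
  obtain ⟨C, R, P, Q, rfl, hPC, hRQ⟩ := Matrix.exists_rank_factorization hA
  have hPAQ : P * (C * R) * Q = 1 := by
    rw [← Matrix.mul_assoc, hPC, Matrix.one_mul, hRQ]
  have hE : (1 - C * P) * (C * R) = 0 := by
    rw [Matrix.sub_mul, Matrix.one_mul, Matrix.mul_assoc, ← Matrix.mul_assoc P, hPC,
      Matrix.one_mul, sub_self]
  have hF : C * R * (1 - Q * R) = 0 := by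
    rw [Matrix.mul_sub, Matrix.mul_one, Matrix.mul_assoc, ← Matrix.mul_assoc R, hRQ,
      Matrix.one_mul, sub_self]
  have hL : Submodule.span K _ ≤ LinearMap.ker
      (mulRightLinearMap (Fin m) K (1 - Q * R) ∘ₗ mulLeftLinearMap (Fin n) K (1 - C * P)) :=
    Submodule.span_le.2 <| Set.image_subset_iff.2 fun x hx =>
      Matrix.mul_mul_eq_zero_of_mem_tangentSpaceAt hPAQ hE hF hx
  rw [two_mul]
  exact matrixSliceRank_le_of_forall_eq_mul_add_mul C R fun X hX =>
    ⟨_, _, Matrix.eq_mul_add_mul_of_sub_mul_sub_eq_zero (hL hX)⟩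

/-- The tangent space to `M_r` at a rank-`r` matrix, viewed as a matrix
space, has slice rank at most `2r`. -/
theorem sliceRank_tangentSpace_determinantal
    {K : Type*} [Field K] [IsAlgClosed K] {m n r : ℕ}
    (A : Matrix (Fin m) (Fin n) K) (hA : A.rank = r) :
    matrixSliceRank (Submodule.span K
      ((fun v : Fin m × Fin n → K => Matrix.of fun i j => v (i, j)) ''
        tangentSpaceAt K
          {v : Fin m × Fin n → K | (Matrix.of fun i j => v (i, j)).rank ≤ r}
          (fun p => A p.1 p.2))) ≤ 2 * r :=
  sliceRank_tangentSpace_determinantal_general A hA
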